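/- For every bounded function F : 𝒱 → ℂ, the Serre shift satisfies W M_F = M_{𝔞F} W and W* M_F W = M_{𝔟F}, where 𝔞F(n,x) := F(n−1, x mod s^{n−1}) for n ≥ 1 and 𝔞F(0,x) := 0, and 𝔟F(n,x) := (1/s)·Σ_{j=0}^{s-1} F(n+1, x + j·s^n). -/

import Mathlib

/- Fix an integer `s ≥ 2`.  `Vtx s = Σ n, Fin (s^n)`, `Hsp s = ℓ²(Vtx s, ℂ)` with
canonical orthonormal basis `Evec s v = lp.single 2 v 1`.  For bounded
`F : Vtx s → ℂ`, `M_F` is the diagonal operator `M_F E_{(n,x)} = F(n,x)·E_{(n,x)}`. -/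

noncomputable section

abbrev Vtx (s : ℕ) := Σ n : ℕ, Fin (s ^ n)

abbrev Hsp (s : ℕ) := lp (fun _ : Vtx s => ℂ) 2

def Evec (s : ℕ) (v : Vtx s) : Hsp s := lp.single 2 v 1

def idxW (s n : ℕ) (x : Fin (s ^ n)) (j : Fin s) : Fin (s ^ (n + 1)) :=
  ⟨(x : ℕ) + (j : ℕ) * s ^ n, by
    have hx := x.2
    have hj := j.2
    have h1 : (j : ℕ) * s ^ n ≤ (s - 1) * s ^ n :=
      Nat.mul_le_mul (by omega) le_rfl
    have h2 : (s - 1) * s ^ n = s * s ^ n - s ^ n := by rw [Nat.sub_one_mul]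
    have h3 : s ^ n ≤ s * s ^ n := Nat.le_mul_of_pos_left _ (by omega)
    have h4 : s ^ (n + 1) = s * s ^ n := by rw [pow_succ]; ring
    omega⟩

/-- `𝔞F(n,x) = F(n−1, x mod s^{n−1})` for `n ≥ 1` and `𝔞F(0,x) = 0`. -/
def aF (s : ℕ) (F : Vtx s → ℂ) : Vtx s → ℂ
  | ⟨0, _⟩ => 0
  | ⟨n + 1, x⟩ =>
      F ⟨n, ⟨(x : ℕ) % s ^ n, by
        have h1 : 0 < s ^ (n + 1) := lt_of_le_of_lt (Nat.zero_le _) x.2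
        have hs0 : 0 < s := by
          rcases Nat.eq_zero_or_pos s with h | h
          · rw [h, zero_pow (Nat.succ_ne_zero n)] at h1; omega
          · exact h
        exact Nat.mod_lt _ (pow_pos hs0 n)⟩⟩

/-- `𝔟F(n,x) = (1/s)·Σ_{j=0}^{s-1} F(n+1, x + j·s^n)`. -/
def bF (s : ℕ) (F : Vtx s → ℂ) (v : Vtx s) : ℂ :=
  (1 / (s : ℂ)) * ∑ j : Fin s, F ⟨v.1 + 1, idxW s v.1 v.2 j⟩

/-! `W` sends `E_v` to `1/√s` times the sum of the basis vectors of the `s` children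
`(n + 1, x + j s^n)` of `v = (n, x)` in the `s`-ary tree. Distinct pairs (vertex, digit) give
distinct children, and reducing a child modulo `s^n` recovers its parent, so `𝔞F` takes the
constant value `F v` on the children of `v`; this gives `W M_F = M_{𝔞F} W` on basis vectors.
Likewise `⟪W E_w, M_F W E_v⟫` vanishes unless `w = v`, when it is `1/s` times the sum of `F`
over the children of `v`, i.e. `𝔟F v`. -/

open scoped InnerProductSpace

namespace lp

variable {ι 𝕜 F : Type*} [RCLike 𝕜] [DecidableEq ι]

theorem ext_single_one [AddCommMonoid F] [Module 𝕜 F] [TopologicalSpace F] [T2Space F]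
    {A B : ℓ²(ι, 𝕜) →L[𝕜] F} (h : ∀ i, A (lp.single 2 i 1) = B (lp.single 2 i 1)) : A = B :=
  lp.ext_continuousLinearMap ENNReal.ofNat_ne_top fun i => ContinuousLinearMap.ext_ring (h i)

theorem ext_inner_single_one {x y : ℓ²(ι, 𝕜)}
    (h : ∀ i, ⟪lp.single 2 i 1, x⟫_𝕜 = ⟪lp.single 2 i 1, y⟫_𝕜) : x = y := by
  exact lp.ext <| funext fun i => by simpa [lp.inner_single_left] using h i

end lp

theorem inner_Evec_Evec {s : ℕ} (u v : Vtx s) :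
    ⟪Evec s u, Evec s v⟫_ℂ = if u = v then 1 else 0 := by
  simp [Evec, lp.inner_single_left, lp.single_apply, Pi.single_apply]

def Vtx.child {s : ℕ} (v : Vtx s) (j : Fin s) : Vtx s := ⟨v.1 + 1, idxW s v.1 v.2 j⟩

theorem idxW_mod (s n : ℕ) (x : Fin (s ^ n)) (j : Fin s) : (idxW s n x j : ℕ) % s ^ n = x := by
  rw [idxW, Nat.add_mul_mod_self_right, Nat.mod_eq_of_lt x.2]

theorem Vtx.child_inj {s : ℕ} {v w : Vtx s} {j k : Fin s} :
    v.child j = w.child k ↔ v = w ∧ j = k := by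
  obtain ⟨n, x⟩ := v
  obtain ⟨m, y⟩ := w
  refine ⟨fun h => ?_, by rintro ⟨h, rfl⟩; rw [h]⟩
  obtain ⟨hnm, hxy⟩ := Sigma.mk.inj_iff.mp h
  obtain rfl : n = m := Nat.succ_injective hnm
  have hval := congrArg Fin.val (eq_of_heq hxy)
  have hx : x = y := Fin.ext <| by simpa only [idxW_mod] using congrArg (· % s ^ n) hval
  subst hx
  refine ⟨rfl, Fin.ext <| Nat.eq_of_mul_eq_mul_right (pow_pos j.pos n) ?_⟩
  simpa [idxW] using hval

theorem aF_child {s : ℕ} (F : Vtx s → ℂ) (v : Vtx s) (j : Fin s) : aF s F (v.child j) = F v := by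
  obtain ⟨n, x⟩ := v
  exact congrArg F (Sigma.ext rfl (heq_of_eq (Fin.ext (idxW_mod s n x j))))

theorem bF_eq_sum_child {s : ℕ} (F : Vtx s → ℂ) (v : Vtx s) :
    bF s F v = 1 / (s : ℂ) * ∑ j, F (v.child j) :=
  rfl

theorem inner_sum_child_Evec {s : ℕ} (G : Vtx s → ℂ) (v w : Vtx s) :
    ⟪∑ k, Evec s (w.child k), ∑ j, G (v.child j) • Evec s (v.child j)⟫_ℂ =
      if w = v then ∑ j, G (v.child j) else 0 := by
  simp only [sum_inner, inner_sum, inner_smul_right, inner_Evec_Evec, Vtx.child_inj]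
  split_ifs with hwv
  · subst hwv
    simp
  · simp [hwv]

theorem statement17_general (s : ℕ) (W : Hsp s →L[ℂ] Hsp s)
    (hW : ∀ (n : ℕ) (x : Fin (s ^ n)),
      W (Evec s ⟨n, x⟩) = (1 / (Real.sqrt s : ℂ)) • ∑ j : Fin s, Evec s ⟨n + 1, idxW s n x j⟩)
    (F : Vtx s → ℂ)
    (MF MaF MbF : Hsp s →L[ℂ] Hsp s)
    (hMF : ∀ v : Vtx s, MF (Evec s v) = F v • Evec s v)
    (hMaF : ∀ v : Vtx s, MaF (Evec s v) = aF s F v • Evec s v)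
    (hMbF : ∀ v : Vtx s, MbF (Evec s v) = bF s F v • Evec s v) :
    W * MF = MaF * W ∧
    ContinuousLinearMap.adjoint W * MF * W = MbF := by
  set c : ℂ := 1 / (Real.sqrt s : ℂ)
  have hWchild : ∀ v : Vtx s, W (Evec s v) = c • ∑ j, Evec s (v.child j) := fun ⟨n, x⟩ => hW n x
  have hc : c * starRingEnd ℂ c = 1 / s := by
    simp only [c, map_div₀, map_one, Complex.conj_ofReal]
    rw [div_mul_div_comm, one_mul, ← Complex.ofReal_mul, Real.mul_self_sqrt (Nat.cast_nonneg s),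
      Complex.ofReal_natCast]
  refine ⟨lp.ext_single_one fun v => ?_,
    lp.ext_single_one fun v => lp.ext_inner_single_one fun w => ?_⟩
  · change W (MF (Evec s v)) = MaF (W (Evec s v))
    simp only [hMF, map_smul, hWchild, map_sum, hMaF, aF_child, Finset.smul_sum, smul_comm (F v)]
  · change ⟪Evec s w, ContinuousLinearMap.adjoint W (MF (W (Evec s v)))⟫_ℂ =
      ⟪Evec s w, MbF (Evec s v)⟫_ℂ
    rw [ContinuousLinearMap.adjoint_inner_right, hWchild, hWchild, map_smul, map_sum]
    simp only [hMF, hMbF, inner_smul_left, inner_smul_right, inner_sum_child_Evec, inner_Evec_Evec,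
      bF_eq_sum_child, ← mul_assoc, hc, mul_ite, mul_one, mul_zero]

/-- For every bounded `F : Vtx s → ℂ`, the Serre shift
`W E_{(n,x)} = (1/√s)·Σ_{j=0}^{s-1} E_{(n+1, x + j·s^n)}` satisfies
`W M_F = M_{𝔞F} W` and `W* M_F W = M_{𝔟F}`. -/
theorem statement17 (s : ℕ) (hs : 2 ≤ s) (W : Hsp s →L[ℂ] Hsp s)
    (hW : ∀ (n : ℕ) (x : Fin (s ^ n)),
      W (Evec s ⟨n, x⟩) = (1 / (Real.sqrt s : ℂ)) • ∑ j : Fin s, Evec s ⟨n + 1, idxW s n x j⟩)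
    (F : Vtx s → ℂ) (hF : ∃ C : ℝ, ∀ v : Vtx s, ‖F v‖ ≤ C)
    (MF MaF MbF : Hsp s →L[ℂ] Hsp s)
    (hMF : ∀ v : Vtx s, MF (Evec s v) = F v • Evec s v)
    (hMaF : ∀ v : Vtx s, MaF (Evec s v) = aF s F v • Evec s v)
    (hMbF : ∀ v : Vtx s, MbF (Evec s v) = bF s F v • Evec s v) :
    W * MF = MaF * W ∧
    ContinuousLinearMap.adjoint W * MF * W = MbF :=
  statement17_general s W hW F MF MaF MbF hMF hMaF hMbF
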